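/- Assume the standing hypotheses (★). Call a map γ : [a,b] → X a geodesic if every t ∈ [a,b] has ε > 0 with dist(γ(s), γ(s')) = |s − s'| for all s, s' ∈ [a,b] ∩ (t−ε, t+ε). Suppose γ₁, γ₂ : [0, 2π] → X are geodesics with γ₁(0) = γ₂(0), and suppose the images of Ψ∘γ₁ and Ψ∘γ₂ are two distinct great circles in S. Then γ₂(0) = γ₂(2π) (and likewise γ₁(0) = γ₁(2π)). -/

import Mathlib

open RealInnerProductSpace

/-- Standing hypotheses (★): `E` is a finite-dimensional real inner product space of
dimension at least 3 with unit sphere `S = {f | ‖f‖ = 1}` carrying the angular distance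
`d_S(x,y) = arccos ⟪x,y⟫`; `X` is a compact, path-connected, locally path-connected metric
space and `Ψ : X → E` is a continuous map into `S` such that:
(i) for every nonzero `u` and every path component `N` of `Ψ⁻¹(H_u)`
(where `H_u = {f | ⟪f,u⟫ > 0}`), `Ψ` restricted to `N` is injective and
`dist a b = d_S (Ψ a) (Ψ b)` on `N`;
(ii) for every such `N` there is a convex cone `C_N` with `Ψ(N) = S ∩ C_N ∩ H_u`, and
`Ψ(N)` has nonempty interior in `S`;
(iii) any two points of `X` are joined by a minimizing geodesic. -/
structure StarHyp (E : Type*) [NormedAddCommGroup E] [InnerProductSpace ℝ E]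
    (X : Type*) [MetricSpace X] (Ψ : X → E) : Prop where
  finiteDim : FiniteDimensional ℝ E
  dim : 3 ≤ Module.finrank ℝ E
  compact : CompactSpace X
  pathConn : PathConnectedSpace X
  locPathConn : LocPathConnectedSpace X
  unit : ∀ x, ‖Ψ x‖ = 1
  cont : Continuous Ψ
  isometric : ∀ u : E, u ≠ 0 → ∀ x₀ : X, 0 < ⟪Ψ x₀, u⟫ →
    ∀ a ∈ pathComponentIn (Ψ ⁻¹' {f : E | 0 < ⟪f, u⟫}) x₀,
      ∀ b ∈ pathComponentIn (Ψ ⁻¹' {f : E | 0 < ⟪f, u⟫}) x₀,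
        (Ψ a = Ψ b → a = b) ∧ dist a b = Real.arccos ⟪Ψ a, Ψ b⟫
  image_convex : ∀ u : E, u ≠ 0 → ∀ x₀ : X, 0 < ⟪Ψ x₀, u⟫ →
    ∃ C : Set E, (∀ a ∈ C, ∀ b ∈ C, a + b ∈ C) ∧
      (∀ t : ℝ, 0 < t → ∀ a ∈ C, t • a ∈ C) ∧
      Ψ '' pathComponentIn (Ψ ⁻¹' {f : E | 0 < ⟪f, u⟫}) x₀ =
        {f : E | ‖f‖ = 1} ∩ C ∩ {f : E | 0 < ⟪f, u⟫}
  image_interior : ∀ u : E, u ≠ 0 → ∀ x₀ : X, 0 < ⟪Ψ x₀, u⟫ →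
    ∃ f₀ ∈ Ψ '' pathComponentIn (Ψ ⁻¹' {f : E | 0 < ⟪f, u⟫}) x₀, ∃ ε > 0,
      ∀ g : E, ‖g‖ = 1 → ‖g - f₀‖ < ε →
        g ∈ Ψ '' pathComponentIn (Ψ ⁻¹' {f : E | 0 < ⟪f, u⟫}) x₀
  geodesicSpace : ∀ x y : X, ∃ γ : ℝ → X, γ 0 = x ∧ γ (dist x y) = y ∧
    ∀ s ∈ Set.Icc 0 (dist x y), ∀ t ∈ Set.Icc 0 (dist x y), dist (γ s) (γ t) = |s - t|

/-!
Along a geodesic `γ`, `Ψ` is locally an isometry onto its image in the sphere, so a geodesic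
`γ : [0, 2π] → X` whose image runs in a great circle is a unit-speed parametrisation
`s ↦ cos s • f + sin s • w` of it (the sign of the speed cannot jump, by connectedness).

Let `γ₁, γ₂` start at a common point over `f` with directions `w₁ ≠ ±w₂`. The half-space `H_u`,
`u = f + w₁ + w₂`, contains both quarter arcs from `f` to `wᵢ`, so `w₁, w₂` lie in the image of
one path component `N` of `Ψ⁻¹(H_u)`. That image is the trace of a convex cone, so it contains
the short arc from `w₁` to `w₂`, which lifts to `N` because `Ψ` is an isometry on `N`. The lifted
arc and the quarter arcs from `wᵢ` to `-f` all lie in `H_u'`, `u' = w₁ + w₂ - f`, so by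
injectivity of `Ψ` on path components `γ₁ π = γ₂ π`. Running the same argument from this point,
along `γ₁` forwards and `γ₂` backwards, gives `γ₁ (2π) = γ₂ 0`.
-/

open Real Set Filter Topology ComplexConjugate

theorem IsPreconnected.apply_eq_of_eventually_eq {α β : Type*} [TopologicalSpace α] {s : Set α}
    (hs : IsPreconnected s) {f : α → β} (hf : ∀ x ∈ s, ∀ᶠ y in 𝓝[s] x, f y = f x)
    {x y : α} (hx : x ∈ s) (hy : y ∈ s) : f x = f y := by
  let _ : TopologicalSpace β := ⊥
  have : DiscreteTopology β := ⟨rfl⟩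
  refine hs.constant (fun t ht => ?_) hx hy
  rw [ContinuousWithinAt, nhds_discrete, tendsto_pure]
  exact hf t ht

theorem frequently_ne_nhdsWithin_Icc {a b t : ℝ} (hab : a < b) (ht : t ∈ Icc a b) :
    ∃ᶠ s in 𝓝[Icc a b] t, s ≠ t := by
  rcases ht.2.lt_or_eq with htb | rfl
  · have hle : 𝓝[>] t ≤ 𝓝[Icc a b] t := nhdsWithin_le_of_mem (Icc_mem_nhdsGT_of_mem ⟨ht.1, htb⟩)
    exact (eventually_nhdsWithin_of_forall fun s (hs : s ∈ Ioi t) => hs.ne').frequently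
      |>.filter_mono hle
  · have hle : 𝓝[<] t ≤ 𝓝[Icc a t] t := nhdsWithin_le_of_mem (Icc_mem_nhdsLT_of_mem ⟨hab, le_rfl⟩)
    exact (eventually_nhdsWithin_of_forall fun s (hs : s ∈ Iio t) => hs.ne).frequently
      |>.filter_mono hle

theorem joinedIn_of_continuousOn_uIcc {Y : Type*} [TopologicalSpace Y] {F : Set Y} {c : ℝ → Y}
    {a b : ℝ} (hc : ContinuousOn c (uIcc a b)) (hF : MapsTo c (uIcc a b) F) :
    JoinedIn F (c a) (c b) :=
  (((convex_uIcc a b).isPathConnected nonempty_uIcc).image' hc).joinedIn _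
    (mem_image_of_mem c left_mem_uIcc) _ (mem_image_of_mem c right_mem_uIcc)
    |>.mono (image_subset_iff.2 hF)

theorem ContinuousOn.eventually_joinedIn {Y : Type*} [TopologicalSpace Y] {c : ℝ → Y}
    {I : Set ℝ} (hc : ContinuousOn c I) (hI : I.OrdConnected) {U : Set Y} (hU : IsOpen U)
    {t : ℝ} (ht : t ∈ I) (hct : c t ∈ U) : ∀ᶠ s in 𝓝[I] t, JoinedIn U (c t) (c s) := by
  obtain ⟨ε, hε, hball⟩ := Metric.mem_nhdsWithin_iff.1 (hc t ht (hU.mem_nhds hct))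
  have hK : (Metric.ball t ε ∩ I).OrdConnected := by
    rw [Real.ball_eq_Ioo]; exact ordConnected_Ioo.inter hI
  filter_upwards [inter_mem_nhdsWithin I (Metric.ball_mem_nhds t hε)] with s hs
  have hsub := hK.uIcc_subset ⟨Metric.mem_ball_self hε, ht⟩ ⟨hs.2, hs.1⟩
  exact joinedIn_of_continuousOn_uIcc (hc.mono (hsub.trans inter_subset_right)) (hsub.trans hball)

def IsLocalGeodesicOn {X : Type*} [PseudoMetricSpace X] (γ : ℝ → X) (I : Set ℝ) : Prop :=
  ∀ t ∈ I, ∃ ε > 0, ∀ s ∈ I, ∀ s' ∈ I, |s - t| < ε → |s' - t| < ε →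
    dist (γ s) (γ s') = |s - s'|

namespace IsLocalGeodesicOn

variable {X : Type*} [PseudoMetricSpace X] {γ : ℝ → X} {I : Set ℝ}

theorem eventually (hγ : IsLocalGeodesicOn γ I) {t : ℝ} (ht : t ∈ I) :
    ∀ᶠ p in 𝓝[I] t ×ˢ 𝓝[I] t, dist (γ p.1) (γ p.2) = |p.1 - p.2| := by
  obtain ⟨ε, hε, hγε⟩ := hγ t ht
  have hnear : ∀ᶠ s in 𝓝[I] t, s ∈ I ∧ |s - t| < ε :=
    Filter.Eventually.and self_mem_nhdsWithin (nhdsWithin_le_nhds (Metric.ball_mem_nhds t hε))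
  filter_upwards [hnear.prod_mk hnear] with p ⟨⟨hs, hst⟩, hs', hs't⟩
  exact hγε p.1 hs p.2 hs' hst hs't

theorem continuousOn (hγ : IsLocalGeodesicOn γ I) : ContinuousOn γ I := by
  intro t ht
  rw [ContinuousWithinAt, tendsto_iff_dist_tendsto_zero]
  have hdist : ∀ᶠ s in 𝓝[I] t, dist (γ s) (γ t) = |s - t| :=
    (hγ.eventually ht).curry.mono fun s hs => hs.self_of_nhdsWithin ht
  refine Tendsto.congr' (hdist.mono fun s hs => hs.symm) ?_
  simpa using ((continuous_id.sub continuous_const).abs.tendsto' t (|t - t|) rfl).mono_left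
    nhdsWithin_le_nhds

end IsLocalGeodesicOn

section GreatCircle

variable {E : Type*} [AddCommGroup E] [Module ℝ E] {p q : E}

noncomputable def greatCircle (p q : E) (t : ℝ) : E := cos t • p + sin t • q

@[simp] theorem greatCircle_zero : greatCircle p q 0 = p := by simp [greatCircle]

@[simp] theorem greatCircle_pi_div_two : greatCircle p q (π / 2) = q := by simp [greatCircle]

@[simp] theorem greatCircle_pi : greatCircle p q π = -p := by simp [greatCircle]

theorem greatCircle_pi_add (s : ℝ) : greatCircle p q (π + s) = greatCircle (-p) (-q) s := by
  simp [greatCircle, cos_add, sin_add]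

theorem greatCircle_pi_sub (s : ℝ) : greatCircle p q (π - s) = greatCircle (-p) q s := by
  simp [greatCircle, cos_pi_sub, sin_pi_sub]

theorem greatCircle_neg_right (s : ℝ) : greatCircle p (-q) s = greatCircle p q (-s) := by
  simp [greatCircle]

theorem range_greatCircle_neg_right : range (greatCircle p (-q)) = range (greatCircle p q) := by
  rw [funext greatCircle_neg_right]
  exact (neg_surjective (G := ℝ)).range_comp (greatCircle p q)

theorem greatCircle_image_Icc_two_pi :
    greatCircle p q '' Icc 0 (2 * π) = range (greatCircle p q) := by
  have hper : Function.Periodic (greatCircle p q) (2 * π) := fun s => by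
    simp [greatCircle]
  simpa using hper.image_Icc two_pi_pos 0

noncomputable def toPlane (p q : E) : ℂ →ₗ[ℝ] E :=
  Complex.reLm.smulRight p + Complex.imLm.smulRight q

theorem toPlane_apply (z : ℂ) : toPlane p q z = z.re • p + z.im • q := rfl

theorem toPlane_mul_exp (z : ℂ) (s : ℝ) :
    toPlane p q (z * Complex.exp (s * Complex.I)) =
      greatCircle (toPlane p q z) (toPlane p q (z * Complex.I)) s := by
  simp only [toPlane_apply, greatCircle, Complex.mul_re, Complex.mul_im,
    Complex.exp_ofReal_mul_I_re, Complex.exp_ofReal_mul_I_im, Complex.I_re, Complex.I_im]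
  module

theorem greatCircle_eq_toPlane (s : ℝ) :
    greatCircle p q s = toPlane p q (Complex.exp (s * Complex.I)) := by
  simpa [toPlane_apply] using (toPlane_mul_exp (p := p) (q := q) 1 s).symm

end GreatCircle

section InnerProductSpace

variable {E : Type*} [NormedAddCommGroup E] [InnerProductSpace ℝ E] {p q u : E}

theorem inner_greatCircle_pos (hp : 0 < ⟪p, u⟫) (hq : 0 < ⟪q, u⟫) {s : ℝ}
    (hs : s ∈ Icc 0 (π / 2)) : 0 < ⟪greatCircle p q s, u⟫ := by
  have hsin : 0 ≤ sin s := sin_nonneg_of_nonneg_of_le_pi hs.1 (by linarith [hs.2, pi_pos])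
  rw [greatCircle, inner_add_left, real_inner_smul_left, real_inner_smul_left]
  rcases hs.2.lt_or_eq with hlt | rfl
  · have hcos : 0 < cos s := cos_pos_of_mem_Ioo ⟨by linarith [hs.1, pi_pos], hlt⟩
    positivity
  · simpa using hq

theorem inner_add_add_pos {f a b : E} (hf : ‖f‖ = 1) (ha : ‖a‖ = 1) (hb : ‖b‖ = 1)
    (hfa : ⟪f, a⟫ = 0) (hfb : ⟪f, b⟫ = 0) (hab : a ≠ -b) :
    0 < ⟪f, f + (a + b)⟫ ∧ 0 < ⟪a, f + (a + b)⟫ ∧ 0 < ⟪b, f + (a + b)⟫ := by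
  have hab' : 0 < 1 + ⟪a, b⟫ := by
    have hpos : 0 < ‖a + b‖ ^ 2 :=
      pow_pos (norm_pos_iff.2 fun h => hab (eq_neg_of_add_eq_zero_left h)) 2
    rw [norm_add_sq_real, ha, hb] at hpos
    linarith
  simp only [inner_add_right, real_inner_self_eq_norm_sq, hf, ha, hb, hfa, hfb,
    real_inner_comm f a, real_inner_comm f b, real_inner_comm a b]
  exact ⟨by norm_num, by linarith, by linarith⟩

theorem inner_toPlane (hp : ‖p‖ = 1) (hq : ‖q‖ = 1) (hpq : ⟪p, q⟫ = 0) (z w : ℂ) :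
    ⟪toPlane p q z, toPlane p q w⟫ = ⟪z, w⟫ := by
  simp only [toPlane_apply, Complex.inner, inner_add_left, inner_add_right, real_inner_smul_left,
    real_inner_smul_right, real_inner_self_eq_norm_sq, hp, hq, hpq, real_inner_comm p q,
    Complex.mul_re, Complex.conj_re, Complex.conj_im]
  ring

theorem norm_toPlane (hp : ‖p‖ = 1) (hq : ‖q‖ = 1) (hpq : ⟪p, q⟫ = 0) (z : ℂ) :
    ‖toPlane p q z‖ = ‖z‖ :=
  ((toPlane p q).isometryOfInner (inner_toPlane hp hq hpq)).norm_map z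

end InnerProductSpace

namespace Complex

theorem re_sq_add_im_sq_of_norm_eq_one {z : ℂ} (hz : ‖z‖ = 1) : z.re ^ 2 + z.im ^ 2 = 1 := by
  have := Complex.sq_norm z
  rw [hz, normSq_apply] at this
  linarith

theorem inner_mul_exp_mul_exp {w : ℂ} (hw : ‖w‖ = 1) (x y : ℝ) :
    ⟪w * exp (x * I), w * exp (y * I)⟫ = Real.cos (y - x) := by
  have hw2 := re_sq_add_im_sq_of_norm_eq_one hw
  simp only [Complex.inner, mul_re, mul_im, conj_re, conj_im, exp_ofReal_mul_I_re,
    exp_ofReal_mul_I_im, Real.cos_sub]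
  linear_combination (Real.cos y * Real.cos x + Real.sin y * Real.sin x) * hw2

theorem exists_sign_eq_mul_exp_of_inner_eq_cos {w z : ℂ} (hw : ‖w‖ = 1) (hz : ‖z‖ = 1) {x : ℝ}
    (h : ⟪w, z⟫ = Real.cos x) : ∃ c : ℝ, (c = 1 ∨ c = -1) ∧ z = w * exp ((c * x : ℝ) * I) := by
  set v := z * conj w
  have hre : v.re = Real.cos x := by rw [← h, Complex.inner]
  have hv := re_sq_add_im_sq_of_norm_eq_one (show ‖v‖ = 1 by simp [v, hw, hz])
  have him : v.im = Real.sin x ∨ v.im = -Real.sin x := by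
    rw [hre] at hv
    exact sq_eq_sq_iff_eq_or_eq_neg.1 (by linarith [Real.sin_sq_add_cos_sq x])
  have hzv : z = w * v := by
    rw [mul_left_comm, mul_conj', hw]; simp
  obtain ⟨c, hc, him⟩ : ∃ c : ℝ, (c = 1 ∨ c = -1) ∧ v.im = Real.sin (c * x) := by
    rcases him with him | him
    exacts [⟨1, Or.inl rfl, by simp [him]⟩, ⟨-1, Or.inr rfl, by simp [him]⟩]
  refine ⟨c, hc, hzv.trans (congrArg _ (Complex.ext ?_ ?_))⟩
  · rw [exp_ofReal_mul_I_re]; rcases hc with rfl | rfl <;> simp [hre]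
  · rw [exp_ofReal_mul_I_im, him]

theorem mul_exp_neg_mul_eq_iff {a b : ℂ} {c s t : ℝ} :
    a * exp ((-(c * s) : ℝ) * I) = b * exp ((-(c * t) : ℝ) * I) ↔
      a = b * exp ((c * (s - t) : ℝ) * I) := by
  have hexp :
      exp ((c * (s - t) : ℝ) * I) * exp ((-(c * s) : ℝ) * I) = exp ((-(c * t) : ℝ) * I) := by
    rw [← exp_add]; push_cast; ring_nf
  rw [← hexp, ← mul_assoc]
  exact (mul_left_injective₀ (exp_ne_zero _)).eq_iff

variable {z : ℝ → ℂ} {J : Set ℝ}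

theorem exists_sign_eventually_eq_mul_exp (hz : ∀ s ∈ J, ‖z s‖ = 1)
    (hrel : ∀ t ∈ J, ∀ᶠ p in 𝓝[J] t ×ˢ 𝓝[J] t, ⟪z p.1, z p.2⟫ = Real.cos (p.1 - p.2))
    {t : ℝ} (ht : t ∈ J) :
    ∃ c : ℝ, (c = 1 ∨ c = -1) ∧ ∀ᶠ s in 𝓝[J] t, z s = z t * exp ((c * (s - t) : ℝ) * I) := by
  have hnear : ∀ᶠ s in 𝓝[J] t,
      (∃ c : ℝ, (c = 1 ∨ c = -1) ∧ z s = z t * exp ((c * (s - t) : ℝ) * I)) ∧ |s - t| < π ∧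
        ∀ᶠ s' in 𝓝[J] t, ⟪z s, z s'⟫ = Real.cos (s - s') := by
    filter_upwards [self_mem_nhdsWithin, (hrel t ht).curry,
      nhdsWithin_le_nhds (Metric.ball_mem_nhds t pi_pos)] with s hs hss' hst
    refine ⟨exists_sign_eq_mul_exp_of_inner_eq_cos (hz t ht) (hz s hs) ?_, hst, hss'⟩
    rw [real_inner_comm]
    exact hss'.self_of_nhdsWithin ht
  by_cases hplus : ∀ᶠ s in 𝓝[J] t, z s = z t * exp ((1 * (s - t) : ℝ) * I)
  · exact ⟨1, Or.inl rfl, hplus⟩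
  refine ⟨-1, Or.inr rfl, ?_⟩
  obtain ⟨s, hs₁, ⟨c, hc, hsc⟩, hsπ, hss'⟩ :=
    ((not_eventually.1 hplus).and_eventually hnear).exists
  obtain rfl : c = -1 := hc.resolve_left (by rintro rfl; exact hs₁ hsc)
  filter_upwards [hnear, hss'] with s' ⟨⟨c', hc', hs'c'⟩, hs'π, _⟩ hcos
  rcases hc' with rfl | rfl
  · -- `s` and `s'` turn opposite ways, so `cos (s + s' - 2t) = cos (s - s')`,
    -- which near `t` forces `s = t` or `s' = t`
    rw [hsc, hs'c', inner_mul_exp_mul_exp (hz t ht)] at hcos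
    have hsin : Real.sin (s - t) * Real.sin (s' - t) = 0 := by
      have hadd := Real.cos_add (s - t) (s' - t)
      have hsub := Real.cos_sub (s - t) (s' - t)
      rw [show 1 * (s' - t) - -1 * (s - t) = (s - t) + (s' - t) by ring,
        show s - s' = (s - t) - (s' - t) by ring] at hcos
      linarith
    rcases mul_eq_zero.1 hsin with h | h
    · obtain rfl : s = t :=
        sub_eq_zero.1 ((Real.sin_eq_zero_iff_of_lt_of_lt (abs_lt.1 hsπ).1 (abs_lt.1 hsπ).2).1 h)
      exact absurd (by simp) hs₁
    · obtain rfl : s' = t :=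
        sub_eq_zero.1 ((Real.sin_eq_zero_iff_of_lt_of_lt (abs_lt.1 hs'π).1 (abs_lt.1 hs'π).2).1 h)
      simp
  · exact hs'c'

theorem not_eventually_eq_mul_exp_and_mul_exp_neg {t : ℝ} (hzt : z t ≠ 0)
    (hJ : ∃ᶠ s in 𝓝[J] t, s ≠ t)
    (hplus : ∀ᶠ s in 𝓝[J] t, z s = z t * exp ((1 * (s - t) : ℝ) * I)) :
    ¬ ∀ᶠ s in 𝓝[J] t, z s = z t * exp ((-1 * (s - t) : ℝ) * I) := by
  intro hminus
  obtain ⟨s, hst, hs₁, hs₂, hsπ⟩ := (hJ.and_eventually (hplus.and (hminus.and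
    (nhdsWithin_le_nhds (Metric.ball_mem_nhds t pi_pos))))).exists
  have him := congrArg Complex.im (mul_left_cancel₀ hzt (hs₁.symm.trans hs₂))
  rw [exp_ofReal_mul_I_im, exp_ofReal_mul_I_im, neg_one_mul, Real.sin_neg, one_mul] at him
  have hsπ' : |s - t| < π := hsπ
  exact hst (sub_eq_zero.1 ((Real.sin_eq_zero_iff_of_lt_of_lt (abs_lt.1 hsπ').1
    (abs_lt.1 hsπ').2).1 (by linarith)))

theorem exists_sign_forall_Icc_eq_mul_exp {T : ℝ} (hT : 0 < T)
    (hz : ∀ s ∈ Icc 0 T, ‖z s‖ = 1)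
    (hrel : ∀ t ∈ Icc 0 T, ∀ᶠ p in 𝓝[Icc 0 T] t ×ˢ 𝓝[Icc 0 T] t,
      ⟪z p.1, z p.2⟫ = Real.cos (p.1 - p.2)) :
    ∃ c : ℝ, (c = 1 ∨ c = -1) ∧ ∀ s ∈ Icc 0 T, z s = z 0 * exp ((c * s : ℝ) * I) := by
  have h0 : (0 : ℝ) ∈ Icc 0 T := ⟨le_rfl, hT.le⟩
  -- `good c t`: near `t`, `z` turns at unit speed in the direction `c`
  let good (c t : ℝ) : Prop := ∀ᶠ s in 𝓝[Icc 0 T] t,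
    z s * exp ((-(c * s) : ℝ) * I) = z t * exp ((-(c * t) : ℝ) * I)
  have hspread (c t : ℝ) (h : good c t) : ∀ᶠ t' in 𝓝[Icc 0 T] t, good c t' := by
    filter_upwards [eventually_eventually_nhdsWithin.2 h, h] with t' h' ht'
    exact h'.mono fun s hs => hs.trans ht'.symm
  have hsign (t : ℝ) (ht : t ∈ Icc 0 T) : good 1 t ∨ good (-1) t := by
    obtain ⟨c, hc, hct⟩ := exists_sign_eventually_eq_mul_exp hz hrel ht
    have hgood : good c t := hct.mono fun s hs => mul_exp_neg_mul_eq_iff.2 hs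
    rcases hc with rfl | rfl
    exacts [Or.inl hgood, Or.inr hgood]
  have hexcl (t : ℝ) (ht : t ∈ Icc 0 T) (h₁ : good 1 t) : ¬ good (-1) t := fun h₂ =>
    not_eventually_eq_mul_exp_and_mul_exp_neg (J := Icc 0 T) (z := z)
      (by rw [← norm_ne_zero_iff, hz t ht]; exact one_ne_zero) (frequently_ne_nhdsWithin_Icc hT ht)
      (h₁.mono fun s hs => mul_exp_neg_mul_eq_iff.1 hs)
      (h₂.mono fun s hs => mul_exp_neg_mul_eq_iff.1 hs)
  have hlocal (t : ℝ) (ht : t ∈ Icc 0 T) : ∀ᶠ t' in 𝓝[Icc 0 T] t, good 1 t' = good 1 t := by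
    by_cases h₁ : good 1 t
    · filter_upwards [hspread 1 t h₁] with t' h₁'
      simp only [h₁, h₁']
    · filter_upwards [hspread (-1) t ((hsign t ht).resolve_left h₁), self_mem_nhdsWithin]
        with t' h₂' ht'
      simp only [h₁, eq_iff_iff, iff_false]
      exact fun h₁' => hexcl t' ht' h₁' h₂'
  obtain ⟨c, hc, hgood⟩ : ∃ c : ℝ, (c = 1 ∨ c = -1) ∧ ∀ t ∈ Icc 0 T, good c t := by
    by_cases h₁ : good 1 0
    · exact ⟨1, Or.inl rfl, fun t ht =>
        (isPreconnected_Icc.apply_eq_of_eventually_eq hlocal ht h0).mpr h₁⟩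
    · exact ⟨-1, Or.inr rfl, fun t ht => (hsign t ht).resolve_left fun h =>
        h₁ ((isPreconnected_Icc.apply_eq_of_eventually_eq hlocal ht h0).mp h)⟩
  refine ⟨c, hc, fun s hs => ?_⟩
  simpa using mul_exp_neg_mul_eq_iff.1
    (isPreconnected_Icc.apply_eq_of_eventually_eq (f := fun s => z s * exp ((-(c * s) : ℝ) * I))
      hgood hs h0)

end Complex

section HalfSpace

variable {E : Type*} [NormedAddCommGroup E] [InnerProductSpace ℝ E] {u f g : E}

def openHalfSpace (u : E) : Set E := {f | 0 < ⟪f, u⟫}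

theorem mem_openHalfSpace : f ∈ openHalfSpace u ↔ 0 < ⟪f, u⟫ := Iff.rfl

theorem isOpen_openHalfSpace (u : E) : IsOpen (openHalfSpace u) :=
  isOpen_lt continuous_const (continuous_id.inner continuous_const)

theorem zero_notMem_openHalfSpace (u : E) : (0 : E) ∉ openHalfSpace u := by
  simp [openHalfSpace]

theorem add_mem_openHalfSpace (hf : f ∈ openHalfSpace u) (hg : g ∈ openHalfSpace u) :
    f + g ∈ openHalfSpace u := by
  rw [mem_openHalfSpace, inner_add_left]; exact add_pos hf hg

theorem smul_mem_openHalfSpace {c : ℝ} (hc : 0 < c) (hf : f ∈ openHalfSpace u) :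
    c • f ∈ openHalfSpace u := by
  rw [mem_openHalfSpace, real_inner_smul_left]; exact mul_pos hc hf

end HalfSpace

theorem ConvexCone.joinedIn_sphere_inter {E : Type*} [NormedAddCommGroup E] [NormedSpace ℝ E]
    {K : ConvexCone ℝ E} (hK : (0 : E) ∉ K) {a b : E} (haK : a ∈ K) (hbK : b ∈ K)
    (ha : ‖a‖ = 1) (hb : ‖b‖ = 1) :
    JoinedIn ({f | ‖f‖ = 1} ∩ K) a b := by
  -- radial projection of the segment `[a, b] ⊆ K`
  have hseg : segment ℝ a b ⊆ K := K.convex.segment_subset haK hbK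
  have hne : ∀ f ∈ segment ℝ a b, f ≠ 0 := fun f hf h => hK (h ▸ hseg hf)
  have hproj : ContinuousOn (fun f : E => ‖f‖⁻¹ • f) (segment ℝ a b) :=
    (continuousOn_id.norm.inv₀ fun f hf => norm_ne_zero_iff.2 (hne f hf)).smul continuousOn_id
  refine (((convex_segment a b).isPathConnected ⟨a, left_mem_segment ℝ a b⟩).image' hproj).joinedIn
    a ⟨a, left_mem_segment ℝ a b, by simp [ha]⟩ b ⟨b, right_mem_segment ℝ a b, by simp [hb]⟩
    |>.mono ?_
  rintro _ ⟨f, hf, rfl⟩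
  exact ⟨norm_smul_inv_norm (hne f hf),
    K.smul_mem (inv_pos.2 (norm_pos_iff.2 (hne f hf))) (hseg hf)⟩

namespace StarHyp

variable {E : Type*} [NormedAddCommGroup E] [InnerProductSpace ℝ E] {X : Type*} [MetricSpace X]
  {Ψ : X → E} {u : E} {x₀ x y : X}

theorem injOn_and_dist_eq (h : StarHyp E X Ψ)
    (hx : x ∈ pathComponentIn (Ψ ⁻¹' openHalfSpace u) x₀)
    (hy : y ∈ pathComponentIn (Ψ ⁻¹' openHalfSpace u) x₀) :
    (Ψ x = Ψ y → x = y) ∧ dist x y = arccos ⟪Ψ x, Ψ y⟫ := by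
  have hx₀ : 0 < ⟪Ψ x₀, u⟫ := (show JoinedIn _ x₀ x from hx).source_mem
  exact h.isometric u (by rintro rfl; simp at hx₀) x₀ hx₀ x hx y hy

theorem injOn_pathComponentIn (h : StarHyp E X Ψ) :
    InjOn Ψ (pathComponentIn (Ψ ⁻¹' openHalfSpace u) x₀) :=
  fun _ hx _ hy => (h.injOn_and_dist_eq hx hy).1

theorem dist_eq_arccos (h : StarHyp E X Ψ)
    (hx : x ∈ pathComponentIn (Ψ ⁻¹' openHalfSpace u) x₀)
    (hy : y ∈ pathComponentIn (Ψ ⁻¹' openHalfSpace u) x₀) : dist x y = arccos ⟪Ψ x, Ψ y⟫ :=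
  (h.injOn_and_dist_eq hx hy).2

theorem eq_of_joinedIn (h : StarHyp E X Ψ) (hxy : JoinedIn (Ψ ⁻¹' openHalfSpace u) x y)
    (hΨ : Ψ x = Ψ y) : x = y :=
  h.injOn_pathComponentIn (mem_pathComponentIn_self hxy.source_mem) hxy hΨ

theorem joinedIn_of_joinedIn_image (h : StarHyp E X Ψ) {V : Set E}
    (hx : x ∈ pathComponentIn (Ψ ⁻¹' openHalfSpace u) x₀)
    (hy : y ∈ pathComponentIn (Ψ ⁻¹' openHalfSpace u) x₀)
    (hxy : JoinedIn (Ψ '' pathComponentIn (Ψ ⁻¹' openHalfSpace u) x₀ ∩ V) (Ψ x) (Ψ y)) :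
    JoinedIn (Ψ ⁻¹' V) x y := by
  obtain ⟨γ, hγ⟩ := hxy
  choose φ hφN hφγ using fun t => (hγ t).1
  -- `Ψ` is an isometry from the path component onto its image, so the lift `φ` is continuous
  have hφ : Continuous φ := by
    refine continuous_iff_continuousAt.2 fun t => tendsto_iff_dist_tendsto_zero.2 ?_
    simp_rw [h.dist_eq_arccos (hφN _) (hφN t), hφγ]
    have hγt : arccos ⟪γ t, γ t⟫ = 0 := by
      rw [← hφγ, real_inner_self_eq_norm_sq, h.unit, one_pow, arccos_one]
    exact hγt ▸ (continuous_arccos.comp (γ.continuous.inner continuous_const)).continuousAt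
  refine ⟨⟨⟨φ, hφ⟩, ?_, ?_⟩, fun t => ?_⟩
  · exact h.injOn_pathComponentIn (hφN 0) hx (by simp [hφγ])
  · exact h.injOn_pathComponentIn (hφN 1) hy (by simp [hφγ])
  · show Ψ (φ t) ∈ V
    exact hφγ t ▸ (hγ t).2

theorem joinedIn_of_mem_pathComponentIn (h : StarHyp E X Ψ) {u' : E}
    (hx : x ∈ pathComponentIn (Ψ ⁻¹' openHalfSpace u) x₀)
    (hy : y ∈ pathComponentIn (Ψ ⁻¹' openHalfSpace u) x₀)
    (hxu' : Ψ x ∈ openHalfSpace u') (hyu' : Ψ y ∈ openHalfSpace u') :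
    JoinedIn (Ψ ⁻¹' openHalfSpace u') x y := by
  have hx₀ : 0 < ⟪Ψ x₀, u⟫ := (show JoinedIn _ x₀ x from hx).source_mem
  obtain ⟨C, hCadd, hCsmul, hCimg⟩ := h.image_convex u (by rintro rfl; simp at hx₀) x₀ hx₀
  have hCimg' : Ψ '' pathComponentIn (Ψ ⁻¹' openHalfSpace u) x₀ =
      {f | ‖f‖ = 1} ∩ C ∩ openHalfSpace u := hCimg
  let K : ConvexCone ℝ E :=
    { carrier := C ∩ openHalfSpace u ∩ openHalfSpace u'
      smul_mem' := fun c hc g hg =>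
        ⟨⟨hCsmul c hc g hg.1.1, smul_mem_openHalfSpace hc hg.1.2⟩, smul_mem_openHalfSpace hc hg.2⟩
      add_mem' := fun g hg g' hg' =>
        ⟨⟨hCadd g hg.1.1 g' hg'.1.1, add_mem_openHalfSpace hg.1.2 hg'.1.2⟩,
          add_mem_openHalfSpace hg.2 hg'.2⟩ }
  have hmemK {z : X} (hz : z ∈ pathComponentIn (Ψ ⁻¹' openHalfSpace u) x₀)
      (hzu' : Ψ z ∈ openHalfSpace u') : Ψ z ∈ K := by
    have hz' := mem_image_of_mem Ψ hz
    rw [hCimg'] at hz'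
    exact ⟨⟨hz'.1.2, hz'.2⟩, hzu'⟩
  refine h.joinedIn_of_joinedIn_image hx hy ?_
  rw [hCimg']
  refine (K.joinedIn_sphere_inter (fun h0K => zero_notMem_openHalfSpace u h0K.1.2)
    (hmemK hx hxu') (hmemK hy hyu') (h.unit _) (h.unit _)).mono ?_
  rintro g ⟨hg, ⟨hgC, hgu⟩, hgu'⟩
  exact ⟨⟨⟨hg, hgC⟩, hgu⟩, hgu'⟩

theorem eventually_inner_eq_cos (h : StarHyp E X Ψ) {γ : ℝ → X} {I : Set ℝ}
    (hγ : IsLocalGeodesicOn γ I) (hI : I.OrdConnected) {t : ℝ} (ht : t ∈ I) :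
    ∀ᶠ p in 𝓝[I] t ×ˢ 𝓝[I] t, ⟪Ψ (γ p.1), Ψ (γ p.2)⟫ = cos (p.1 - p.2) := by
  have hN : ∀ᶠ s in 𝓝[I] t, γ s ∈ pathComponentIn (Ψ ⁻¹' openHalfSpace (Ψ (γ t))) (γ t) :=
    hγ.continuousOn.eventually_joinedIn hI ((isOpen_openHalfSpace _).preimage h.cont) ht
      (by simp [mem_openHalfSpace, h.unit])
  filter_upwards [hN.prod_mk hN, hγ.eventually ht] with p ⟨hs, hs'⟩ hd
  rw [← cos_abs, ← hd, h.dist_eq_arccos hs hs',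
    cos_arccos (neg_one_le_real_inner_of_norm_eq_one (h.unit _) (h.unit _))
      (real_inner_le_one_of_norm_eq_one (h.unit _) (h.unit _))]

end StarHyp

section QuarterArcs

variable {E : Type*} [NormedAddCommGroup E] [InnerProductSpace ℝ E] {X : Type*}
  [TopologicalSpace X] {Ψ : X → E} {δ : ℝ → X} {f d u : E}

theorem joinedIn_zero_pi_div_two_of_eqOn_greatCircle (hδ : ContinuousOn δ (Icc 0 π))
    (hΨδ : EqOn (Ψ ∘ δ) (greatCircle f d) (Icc 0 π)) (hf : 0 < ⟪f, u⟫) (hd : 0 < ⟪d, u⟫) :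
    JoinedIn (Ψ ⁻¹' openHalfSpace u) (δ 0) (δ (π / 2)) := by
  have hI : uIcc 0 (π / 2) = Icc 0 (π / 2) := uIcc_of_le (by positivity)
  have hsub : uIcc 0 (π / 2) ⊆ Icc 0 π := hI ▸ Icc_subset_Icc_right (by linarith [pi_pos])
  refine joinedIn_of_continuousOn_uIcc (hδ.mono hsub) fun s hs => ?_
  show (Ψ ∘ δ) s ∈ openHalfSpace u
  rw [hΨδ (hsub hs)]
  exact inner_greatCircle_pos hf hd (hI ▸ hs)

theorem joinedIn_pi_div_two_pi_of_eqOn_greatCircle (hδ : ContinuousOn δ (Icc 0 π))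
    (hΨδ : EqOn (Ψ ∘ δ) (greatCircle f d) (Icc 0 π)) (hf : 0 < ⟪-f, u⟫) (hd : 0 < ⟪d, u⟫) :
    JoinedIn (Ψ ⁻¹' openHalfSpace u) (δ (π / 2)) (δ π) := by
  have hI : uIcc (π / 2) π = Icc (π / 2) π := uIcc_of_le (by linarith [pi_pos])
  have hsub : uIcc (π / 2) π ⊆ Icc 0 π := hI ▸ Icc_subset_Icc_left (by positivity)
  refine joinedIn_of_continuousOn_uIcc (hδ.mono hsub) fun s hs => ?_
  rw [hI] at hs
  show (Ψ ∘ δ) s ∈ openHalfSpace u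
  rw [hΨδ (hsub (hI ▸ hs)), ← sub_sub_cancel π s, greatCircle_pi_sub]
  exact inner_greatCircle_pos hf hd ⟨by linarith [hs.2], by linarith [hs.1]⟩

end QuarterArcs

namespace StarHyp

variable {E : Type*} [NormedAddCommGroup E] [InnerProductSpace ℝ E] {X : Type*} [MetricSpace X]
  {Ψ : X → E}

theorem eq_at_pi_of_eqOn_greatCircle (h : StarHyp E X Ψ) {α β : ℝ → X} {f a b : E}
    (hα : ContinuousOn α (Icc 0 π)) (hβ : ContinuousOn β (Icc 0 π))
    (hf : ‖f‖ = 1) (ha : ‖a‖ = 1) (hb : ‖b‖ = 1) (hfa : ⟪f, a⟫ = 0) (hfb : ⟪f, b⟫ = 0)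
    (hab : a ≠ -b) (hΨα : EqOn (Ψ ∘ α) (greatCircle f a) (Icc 0 π))
    (hΨβ : EqOn (Ψ ∘ β) (greatCircle f b) (Icc 0 π)) (h0 : α 0 = β 0) : α π = β π := by
  have hπ2 : π / 2 ∈ Icc 0 π := ⟨by positivity, by linarith [pi_pos]⟩
  have hππ : π ∈ Icc 0 π := ⟨pi_pos.le, le_rfl⟩
  -- the first quarter arcs lie in `H_u`, `u = f + (a + b)`, the second ones in `H_u'`,
  -- `u' = -f + (a + b)`
  obtain ⟨hfu, hau, hbu⟩ := inner_add_add_pos hf ha hb hfa hfb hab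
  obtain ⟨hfu', hau', hbu'⟩ := inner_add_add_pos (f := -f) (by rwa [norm_neg]) ha hb
    (by rw [inner_neg_left, hfa, neg_zero]) (by rw [inner_neg_left, hfb, neg_zero]) hab
  have hαN := joinedIn_zero_pi_div_two_of_eqOn_greatCircle hα hΨα hfu hau
  have hβN := joinedIn_zero_pi_div_two_of_eqOn_greatCircle hβ hΨβ hfu hbu
  rw [← h0] at hβN
  have hΨα2 : Ψ (α (π / 2)) = a := by simpa using hΨα hπ2
  have hΨβ2 : Ψ (β (π / 2)) = b := by simpa using hΨβ hπ2
  have hmid := h.joinedIn_of_mem_pathComponentIn hαN hβN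
    (by rw [mem_openHalfSpace, hΨα2]; exact hau') (by rw [mem_openHalfSpace, hΨβ2]; exact hbu')
  have hα' := joinedIn_pi_div_two_pi_of_eqOn_greatCircle hα hΨα hfu' hau'
  have hβ' := joinedIn_pi_div_two_pi_of_eqOn_greatCircle hβ hΨβ hfu' hbu'
  refine h.eq_of_joinedIn ((hα'.symm.trans hmid).trans hβ') ?_
  rw [show Ψ (α π) = -f by simpa using hΨα hππ, show Ψ (β π) = -f by simpa using hΨβ hππ]

theorem eq_at_two_pi_of_eqOn_greatCircle (h : StarHyp E X Ψ) {γ₁ γ₂ : ℝ → X} {f w₁ w₂ : E}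
    (hγ₁ : ContinuousOn γ₁ (Icc 0 (2 * π))) (hγ₂ : ContinuousOn γ₂ (Icc 0 (2 * π)))
    (hf : ‖f‖ = 1) (hw₁ : ‖w₁‖ = 1) (hw₂ : ‖w₂‖ = 1) (hfw₁ : ⟪f, w₁⟫ = 0) (hfw₂ : ⟪f, w₂⟫ = 0)
    (hne : w₁ ≠ w₂) (hne' : w₁ ≠ -w₂)
    (hΨγ₁ : EqOn (Ψ ∘ γ₁) (greatCircle f w₁) (Icc 0 (2 * π)))
    (hΨγ₂ : EqOn (Ψ ∘ γ₂) (greatCircle f w₂) (Icc 0 (2 * π))) (h0 : γ₁ 0 = γ₂ 0) :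
    γ₁ (2 * π) = γ₂ 0 := by
  have hsub : Icc 0 π ⊆ Icc 0 (2 * π) := Icc_subset_Icc_right (by linarith [pi_pos])
  have hadd : MapsTo (π + ·) (Icc 0 π) (Icc 0 (2 * π)) := fun s hs =>
    ⟨by linarith [hs.1, pi_pos], by linarith [hs.2]⟩
  have hsub' : MapsTo (π - ·) (Icc 0 π) (Icc 0 (2 * π)) := fun s hs =>
    ⟨by linarith [hs.2], by linarith [hs.1, pi_pos]⟩
  have hπ : γ₁ π = γ₂ π := h.eq_at_pi_of_eqOn_greatCircle (hγ₁.mono hsub) (hγ₂.mono hsub)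
    hf hw₁ hw₂ hfw₁ hfw₂ hne' (hΨγ₁.mono hsub) (hΨγ₂.mono hsub) h0
  -- from `γ₁ π = γ₂ π`, follow `γ₁` forwards and `γ₂` backwards to the antipode `f` of `-f`
  have h2π := h.eq_at_pi_of_eqOn_greatCircle (α := fun s => γ₁ (π + s))
    (β := fun s => γ₂ (π - s)) (f := -f) (a := -w₁) (b := w₂)
    (hγ₁.comp (continuousOn_const.add continuousOn_id) hadd)
    (hγ₂.comp (continuousOn_const.sub continuousOn_id) hsub')
    (by rwa [norm_neg]) (by rwa [norm_neg]) hw₂ (by rwa [inner_neg_neg])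
    (by rw [inner_neg_left, hfw₂, neg_zero]) (neg_injective.ne hne)
    (fun s hs => (hΨγ₁ (hadd hs)).trans (greatCircle_pi_add s))
    (fun s hs => (hΨγ₂ (hsub' hs)).trans (greatCircle_pi_sub s)) (by simpa using hπ)
  simpa [← two_mul] using h2π

theorem exists_eqOn_greatCircle (h : StarHyp E X Ψ) {γ : ℝ → X} {T : ℝ} (hT : 0 < T)
    (hγ : IsLocalGeodesicOn γ (Icc 0 T)) {p q : E} (hp : ‖p‖ = 1) (hq : ‖q‖ = 1)
    (hpq : ⟪p, q⟫ = 0) (himg : (Ψ ∘ γ) '' Icc 0 T ⊆ range (greatCircle p q)) :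
    ∃ w : E, ‖w‖ = 1 ∧ ⟪Ψ (γ 0), w⟫ = 0 ∧ EqOn (Ψ ∘ γ) (greatCircle (Ψ (γ 0)) w) (Icc 0 T) := by
  have h0 : (0 : ℝ) ∈ Icc 0 T := ⟨le_rfl, hT.le⟩
  choose! θ hθ using fun s (hs : s ∈ Icc 0 T) => himg (mem_image_of_mem _ hs)
  set z : ℝ → ℂ := fun s => Complex.exp (θ s * Complex.I)
  have hΨz (s : ℝ) (hs : s ∈ Icc 0 T) : Ψ (γ s) = toPlane p q (z s) := by
    rw [← greatCircle_eq_toPlane, hθ s hs, Function.comp_apply]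
  have hrel (t : ℝ) (ht : t ∈ Icc 0 T) : ∀ᶠ r in 𝓝[Icc 0 T] t ×ˢ 𝓝[Icc 0 T] t,
      ⟪z r.1, z r.2⟫ = Real.cos (r.1 - r.2) := by
    filter_upwards [h.eventually_inner_eq_cos hγ ordConnected_Icc ht,
      prod_mem_prod self_mem_nhdsWithin self_mem_nhdsWithin] with r hr ⟨hr₁, hr₂⟩
    rwa [hΨz _ hr₁, hΨz _ hr₂, inner_toPlane hp hq hpq] at hr
  obtain ⟨c, hc, hzc⟩ : ∃ c : ℝ, (c = 1 ∨ c = -1) ∧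
      ∀ s ∈ Icc 0 T, z s = z 0 * Complex.exp ((c * s : ℝ) * Complex.I) :=
    Complex.exists_sign_forall_Icc_eq_mul_exp hT
      (fun s _ => Complex.norm_exp_ofReal_mul_I _) hrel
  set w := toPlane p q (z 0 * Complex.I)
  have hw : ‖w‖ = 1 := by
    simp [w, z, norm_toPlane hp hq hpq, Complex.norm_exp_ofReal_mul_I]
  have hw0 : ⟪Ψ (γ 0), w⟫ = 0 := by
    rw [hΨz 0 h0, inner_toPlane hp hq hpq, Complex.inner, mul_right_comm, Complex.mul_conj']
    simp [z, Complex.norm_exp_ofReal_mul_I]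
  have hform (s : ℝ) (hs : s ∈ Icc 0 T) : (Ψ ∘ γ) s = greatCircle (Ψ (γ 0)) w (c * s) := by
    rw [Function.comp_apply, hΨz s hs, hzc s hs, toPlane_mul_exp, ← hΨz 0 h0]
  rcases hc with rfl | rfl
  · exact ⟨w, hw, hw0, fun s hs => by simpa using hform s hs⟩
  · refine ⟨-w, by rwa [norm_neg], by rw [inner_neg_right, hw0, neg_zero], fun s hs => ?_⟩
    rw [hform s hs, greatCircle_neg_right, neg_one_mul]

end StarHyp

/-- Under the standing hypotheses (★): if `γ₁, γ₂ : [0,2π] → X` are geodesics (locally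
distance-preserving maps) with `γ₁ 0 = γ₂ 0` whose images under `Ψ` are two distinct great
circles in the unit sphere, then `γ₂ 0 = γ₂ (2π)` and `γ₁ 0 = γ₁ (2π)`. -/
theorem starHyp_two_geodesics_close_up
    {E : Type*} [NormedAddCommGroup E] [InnerProductSpace ℝ E]
    {X : Type*} [MetricSpace X] (Ψ : X → E) (h : StarHyp E X Ψ)
    (γ₁ γ₂ : ℝ → X)
    (hg₁ : ∀ t ∈ Set.Icc 0 (2 * π), ∃ ε > 0, ∀ s ∈ Set.Icc 0 (2 * π),
      ∀ s' ∈ Set.Icc 0 (2 * π), |s - t| < ε → |s' - t| < ε →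
        dist (γ₁ s) (γ₁ s') = |s - s'|)
    (hg₂ : ∀ t ∈ Set.Icc 0 (2 * π), ∃ ε > 0, ∀ s ∈ Set.Icc 0 (2 * π),
      ∀ s' ∈ Set.Icc 0 (2 * π), |s - t| < ε → |s' - t| < ε →
        dist (γ₂ s) (γ₂ s') = |s - s'|)
    (hstart : γ₁ 0 = γ₂ 0)
    (hcirc₁ : ∃ p q : E, ‖p‖ = 1 ∧ ‖q‖ = 1 ∧ ⟪p, q⟫ = 0 ∧
      (Ψ ∘ γ₁) '' Set.Icc 0 (2 * π) =
        Set.range (fun t : ℝ => Real.cos t • p + Real.sin t • q))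
    (hcirc₂ : ∃ p q : E, ‖p‖ = 1 ∧ ‖q‖ = 1 ∧ ⟪p, q⟫ = 0 ∧
      (Ψ ∘ γ₂) '' Set.Icc 0 (2 * π) =
        Set.range (fun t : ℝ => Real.cos t • p + Real.sin t • q))
    (hdistinct : (Ψ ∘ γ₁) '' Set.Icc 0 (2 * π) ≠ (Ψ ∘ γ₂) '' Set.Icc 0 (2 * π)) :
    γ₂ 0 = γ₂ (2 * π) ∧ γ₁ 0 = γ₁ (2 * π) := by
  obtain ⟨p₁, q₁, hp₁, hq₁, hpq₁, himg₁⟩ := hcirc₁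
  obtain ⟨p₂, q₂, hp₂, hq₂, hpq₂, himg₂⟩ := hcirc₂
  obtain ⟨w₁, hw₁, hfw₁, hΨγ₁⟩ :=
    h.exists_eqOn_greatCircle two_pi_pos hg₁ hp₁ hq₁ hpq₁ himg₁.subset
  obtain ⟨w₂, hw₂, hfw₂, hΨγ₂⟩ :=
    h.exists_eqOn_greatCircle two_pi_pos hg₂ hp₂ hq₂ hpq₂ himg₂.subset
  rw [← hstart] at hfw₂ hΨγ₂
  have himage {γ : ℝ → X} {w : E} (hΨγ : EqOn (Ψ ∘ γ) (greatCircle (Ψ (γ₁ 0)) w) (Icc 0 (2 * π))) :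
      (Ψ ∘ γ) '' Icc 0 (2 * π) = range (greatCircle (Ψ (γ₁ 0)) w) := by
    rw [hΨγ.image_eq, greatCircle_image_Icc_two_pi]
  have hne : w₁ ≠ w₂ := by
    rintro rfl
    exact hdistinct ((himage hΨγ₁).trans (himage hΨγ₂).symm)
  have hne' : w₁ ≠ -w₂ := by
    rintro rfl
    exact hdistinct ((himage hΨγ₁).trans (range_greatCircle_neg_right.trans (himage hΨγ₂).symm))
  have hf := h.unit (γ₁ 0)
  have hγ₁ := IsLocalGeodesicOn.continuousOn hg₁
  have hγ₂ := IsLocalGeodesicOn.continuousOn hg₂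
  exact ⟨hstart.symm.trans (h.eq_at_two_pi_of_eqOn_greatCircle hγ₂ hγ₁ hf hw₂ hw₁ hfw₂ hfw₁
      hne.symm (fun hw => hne' (by rw [hw, neg_neg])) hΨγ₂ hΨγ₁ hstart.symm).symm,
    hstart.trans (h.eq_at_two_pi_of_eqOn_greatCircle hγ₁ hγ₂ hf hw₁ hw₂ hfw₁ hfw₂ hne hne'
      hΨγ₁ hΨγ₂ hstart).symm⟩
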